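/- arXiv:2402.05680 — 3 statements merged into one kernel-verified Lean document; each statement's English description precedes it below -/
import Mathlib

section
/- (Sample size theorem) Fix a finite vocabulary τ, a symbol q ∉ τ, a distribution μ on (τ ∪ {q})-types, and ε, δ > 0. If n ≥ 2 ln(2^{|τ|+1}/δ) / ε², then with probability at least 1 − δ over an i.i.d. sample M of size n from μ, the empirical ideal classifier φ_id^M agrees with the ideal classifier φ_id^μ on every τ-type t that is ε-separated by μ (i.e., for every such t, t ⊨ φ_id^M iff t ⊨ φ_id^μ). In particular, if μ ε-separates every τ-type, then φ_id^M = φ_id^μ with probability at least 1 − δ. -/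
open scoped Classical
open Finset

inductive PropForm (α : Type) : Type where
  | var : α → PropForm α
  | fls : PropForm α
  | tru : PropForm α
  | neg : PropForm α → PropForm α
  | and : PropForm α → PropForm α → PropForm α
  | or  : PropForm α → PropForm α → PropForm α

namespace PropForm
def eval {α : Type} (v : α → Bool) : PropForm α → Bool
  | var p => v p
  | fls => false
  | tru => true
  | neg φ => !(eval v φ)
  | and φ ψ => eval v φ && eval v ψ
  | or φ ψ => eval v φ || eval v ψ
end PropForm

/-- Disjunction of a finite family of formulas. -/
noncomputable def bigOr {α β : Type} (s : Finset β) (f : β → PropForm α) : PropForm α :=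
  s.toList.foldr (fun b acc => PropForm.or (f b) acc) PropForm.fls

/-- The σ-type formula of a truth assignment `t`: the conjunction containing,
for each symbol `p`, the literal `p` if `t p = true` and `¬p` otherwise. -/
noncomputable def typeForm {α : Type} [Fintype α] (t : α → Bool) : PropForm α :=
  (Finset.univ : Finset α).toList.foldr
    (fun p acc => PropForm.and (cond (t p) (PropForm.var p) (PropForm.neg (PropForm.var p))) acc)
    PropForm.tru

/-- The number of samples in `ω` equal to the (τ ∪ {q})-type `(t, b)`. -/
noncomputable def sCount {τ : Type} [Fintype τ] [DecidableEq τ] {n : ℕ}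
    (ω : Fin n → ((τ → Bool) × Bool)) (t : τ → Bool) (b : Bool) : ℕ :=
  (Finset.univ.filter fun i => ω i = (t, b)).card

/-- Probability of an event under `n` i.i.d. samples from the distribution `μ`
on (τ ∪ {q})-types. -/
noncomputable def prob {τ : Type} [Fintype τ] [DecidableEq τ] (μ : (τ → Bool) → Bool → ℝ)
    {n : ℕ} (E : (Fin n → ((τ → Bool) × Bool)) → Prop) : ℝ :=
  ∑ ω ∈ Finset.univ.filter (fun ω : Fin n → ((τ → Bool) × Bool) => E ω),
    ∏ i, μ (ω i).1 (ω i).2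

lemma sum_prod_fn {A : Type} [Fintype A] (n : ℕ) (F : A → ℝ) :
    ∑ ω : Fin n → A, ∏ i, F (ω i) = (∑ a, F a) ^ n := by
  induction n with
  | zero => simp
  | succ n ih =>
    rw [pow_succ, mul_comm, ← ih]
    rw [← Equiv.sum_comp (Fin.consEquiv fun _ : Fin (n+1) => A)
      (fun ω : Fin (n+1) → A => ∏ i, F (ω i))]
    rw [Fintype.sum_prod_type]
    rw [Finset.sum_mul]
    refine Finset.sum_congr rfl fun a _ => ?_
    rw [Finset.mul_sum]
    refine Finset.sum_congr rfl fun ω _ => ?_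
    simp [Fin.consEquiv, Fin.prod_univ_succ, mul_comm]

lemma key_ineq (x : ℝ) (hx : 0 ≤ x) :
    Real.cosh x - 1 - x * Real.sinh x ≤ -(x ^ 2 / 2) := by
  have hmono : MonotoneOn (fun y : ℝ => y * Real.sinh y - Real.cosh y + 1 - y ^ 2 / 2)
      (Set.Ici 0) := by
    have hder : ∀ y : ℝ, HasDerivAt (fun y : ℝ => y * Real.sinh y - Real.cosh y + 1 - y ^ 2 / 2)
        (y * (Real.cosh y - 1)) y := by
      intro y
      have h1 : HasDerivAt (fun y : ℝ => y * Real.sinh y)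
          (1 * Real.sinh y + y * Real.cosh y) y :=
        (hasDerivAt_id y).mul (Real.hasDerivAt_sinh y)
      have h2 := Real.hasDerivAt_cosh y
      have h3 : HasDerivAt (fun y : ℝ => y ^ 2 / 2) y y := by
        simpa using (hasDerivAt_pow 2 y).div_const 2
      have := ((h1.sub h2).add_const 1).sub h3
      exact this.congr_deriv (by ring)
    apply monotoneOn_of_deriv_nonneg (convex_Ici 0)
    · exact Continuous.continuousOn (by continuity)
    · intro y _
      exact (hder y).differentiableAt.differentiableWithinAt
    · intro y hy
      rw [(hder y).deriv]
      have h1 : (0:ℝ) ≤ y := le_of_lt (by simpa using hy)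
      nlinarith [Real.one_le_cosh y]
  have h0 : (0:ℝ) ∈ Set.Ici (0:ℝ) := Set.mem_Ici.mpr le_rfl
  have hxm : x ∈ Set.Ici (0:ℝ) := hx
  have := hmono h0 hxm hx
  simp [Real.sinh_zero, Real.cosh_zero] at this
  linarith

lemma key_exp (x : ℝ) (hx : 0 ≤ x) :
    (Real.exp x + Real.exp (-x)) / 2 - 1 - x * ((Real.exp x - Real.exp (-x)) / 2)
      ≤ -(x ^ 2 / 2) := by
  have := key_ineq x hx
  rw [Real.cosh_eq, Real.sinh_eq] at this
  linarith

lemma hoeff (ε p q : ℝ) (hε : 0 < ε) (hpq1 : p + q ≤ 1)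
    (hsep : q + ε ≤ p) :
    1 + q * (Real.exp ε - 1) + p * (Real.exp (-ε) - 1) ≤ Real.exp (-(ε ^ 2 / 2)) := by
  have hf1 : Real.exp (-ε) ≤ 1 := Real.exp_le_one_iff.mpr (by linarith)
  have step1 : p * (Real.exp (-ε) - 1) ≤ (q + ε) * (Real.exp (-ε) - 1) :=
    mul_le_mul_of_nonpos_right hsep (by linarith)
  have hef : 2 ≤ Real.exp ε + Real.exp (-ε) := by
    have h1 := Real.add_one_le_exp ε
    have h2 := Real.add_one_le_exp (-ε)
    linarith
  have hq2 : q ≤ (1 - ε) / 2 := by linarith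
  have step2 : q * (Real.exp ε + Real.exp (-ε) - 2)
      ≤ (1 - ε) / 2 * (Real.exp ε + Real.exp (-ε) - 2) :=
    mul_le_mul_of_nonneg_right hq2 (by linarith)
  have key := key_exp ε hε.le
  have expgoal : 1 + (-(ε ^ 2 / 2)) ≤ Real.exp (-(ε ^ 2 / 2)) := by
    have := Real.add_one_le_exp (-(ε ^ 2 / 2)); linarith
  nlinarith [step1, step2, key, expgoal]

lemma chernoff {A : Type} [Fintype A] (n : ℕ) (ν : A → ℝ) (hν : ∀ a, 0 ≤ ν a) (g : A → ℝ) :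
    ∑ ω ∈ Finset.univ.filter (fun ω : Fin n → A => 0 ≤ ∑ i, g (ω i)), ∏ i, ν (ω i)
      ≤ (∑ a, ν a * Real.exp (g a)) ^ n := by
  have h1 : ∑ ω ∈ Finset.univ.filter (fun ω : Fin n → A => 0 ≤ ∑ i, g (ω i)), ∏ i, ν (ω i)
      ≤ ∑ ω ∈ Finset.univ.filter (fun ω : Fin n → A => 0 ≤ ∑ i, g (ω i)),
          (∏ i, ν (ω i)) * Real.exp (∑ i, g (ω i)) := by
    apply Finset.sum_le_sum
    intro ω hω
    have hmem := (Finset.mem_filter.mp hω).2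
    have h1 : (1:ℝ) ≤ Real.exp (∑ i, g (ω i)) := Real.one_le_exp hmem
    have h0 : (0:ℝ) ≤ ∏ i, ν (ω i) := Finset.prod_nonneg fun i _ => hν _
    nlinarith
  have h2 : ∑ ω ∈ Finset.univ.filter (fun ω : Fin n → A => 0 ≤ ∑ i, g (ω i)),
        (∏ i, ν (ω i)) * Real.exp (∑ i, g (ω i))
      ≤ ∑ ω : Fin n → A, (∏ i, ν (ω i)) * Real.exp (∑ i, g (ω i)) := by
    apply Finset.sum_le_sum_of_subset_of_nonneg (Finset.filter_subset _ _)
    intro ω _ _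
    have h0 : (0:ℝ) ≤ ∏ i, ν (ω i) := Finset.prod_nonneg fun i _ => hν _
    positivity
  have h3 : ∑ ω : Fin n → A, (∏ i, ν (ω i)) * Real.exp (∑ i, g (ω i))
      = (∑ a, ν a * Real.exp (g a)) ^ n := by
    rw [← sum_prod_fn]
    refine Finset.sum_congr rfl fun ω _ => ?_
    rw [Real.exp_sum, ← Finset.prod_mul_distrib]
  linarith

lemma sum_nu_exp {A : Type} [Fintype A] [DecidableEq A] (ν : A → ℝ) (x y : A) (hxy : x ≠ y)
    (lx ly : ℝ) :
    ∑ a, ν a * Real.exp (if a = x then lx else if a = y then ly else 0)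
      = (∑ a, ν a) + ν x * (Real.exp lx - 1) + ν y * (Real.exp ly - 1) := by
  have hpt : ∀ a, ν a * Real.exp (if a = x then lx else if a = y then ly else 0)
      = ν a + (if a = x then ν x * (Real.exp lx - 1) else 0)
            + (if a = y then ν y * (Real.exp ly - 1) else 0) := by
    intro a
    by_cases h1 : a = x
    · subst h1; simp only [if_pos rfl, if_neg hxy, if_true]; ring
    · by_cases h2 : a = y
      · subst h2; simp only [if_pos rfl, if_neg h1, if_true]; ring
      · simp only [if_neg h1, if_neg h2]; simp
  rw [Finset.sum_congr rfl fun a _ => hpt a]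
  rw [Finset.sum_add_distrib, Finset.sum_add_distrib]
  simp

/-- per-sample count identity -/
lemma sCount_cast {τ : Type} [Fintype τ] [DecidableEq τ] {n : ℕ}
    (ω : Fin n → ((τ → Bool) × Bool)) (t : τ → Bool) (b : Bool) :
    (sCount ω t b : ℝ) = ∑ i, if ω i = (t, b) then (1:ℝ) else 0 := by
  rw [sCount, Finset.card_filter]
  push_cast
  rfl

set_option maxHeartbeats 1000000 in
/-- Sample size theorem: if `n ≥ 2 ln(2^{|τ|+1}/δ)/ε²`, then with probability at
least `1 − δ` over an i.i.d. sample of size `n`, the empirical ideal classifier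
agrees with the ideal classifier on every τ-type ε-separated by `μ`. -/
theorem stmt8 {τ : Type} [Fintype τ] [DecidableEq τ] (n : ℕ)
    (μ : (τ → Bool) → Bool → ℝ)
    (hnn : ∀ t b, 0 ≤ μ t b)
    (hsum : ∑ t : τ → Bool, ∑ b : Bool, μ t b = 1)
    (ε δ : ℝ) (hε : 0 < ε) (hδ : 0 < δ)
    (hn : 2 * Real.log ((2 : ℝ) ^ (Fintype.card τ + 1) / δ) / ε ^ 2 ≤ (n : ℝ)) :
    1 - δ ≤ prob μ (fun ω : Fin n → ((τ → Bool) × Bool) =>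
      ∀ t : τ → Bool, ε ≤ |μ t true - μ t false| →
        ((sCount ω t false ≤ sCount ω t true) ↔ (μ t false ≤ μ t true))) := by
  classical
  unfold prob
  set w : (Fin n → ((τ → Bool) × Bool)) → ℝ := fun ω => ∏ i, μ (ω i).1 (ω i).2 with hwdef
  have hw : ∀ ω, 0 ≤ w ω := fun ω => Finset.prod_nonneg fun i _ => hnn _ _
  have hν1 : ∑ a : (τ → Bool) × Bool, μ a.1 a.2 = 1 := by
    rw [Fintype.sum_prod_type]; exact hsum
  have htot : ∑ ω : Fin n → ((τ → Bool) × Bool), w ω = 1 := by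
    rw [hwdef]
    rw [sum_prod_fn n (fun a : (τ → Bool) × Bool => μ a.1 a.2), hν1, one_pow]
  set E : (Fin n → ((τ → Bool) × Bool)) → Prop := fun ω =>
    ∀ t : τ → Bool, ε ≤ |μ t true - μ t false| →
      ((sCount ω t false ≤ sCount ω t true) ↔ (μ t false ≤ μ t true)) with hEdef
  set badT : (τ → Bool) → (Fin n → ((τ → Bool) × Bool)) → Prop := fun t ω =>
    ε ≤ |μ t true - μ t false| ∧
      ¬((sCount ω t false ≤ sCount ω t true) ↔ (μ t false ≤ μ t true)) with hbadTdef
  -- per-type bound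
  have Ht : ∀ t : τ → Bool,
      ∑ ω ∈ Finset.univ.filter (badT t), w ω ≤ Real.exp (-(ε ^ 2 / 2)) ^ n := by
    intro t
    by_cases hsep : ε ≤ |μ t true - μ t false|
    · have hpq1 : μ t true + μ t false ≤ 1 := by
        have h1 : ∑ b, μ t b ≤ ∑ t' : τ → Bool, ∑ b, μ t' b :=
          Finset.single_le_sum (f := fun t' => ∑ b, μ t' b)
            (fun t' _ => Finset.sum_nonneg fun b _ => hnn _ _) (Finset.mem_univ t)
        rw [hsum] at h1
        simpa [Fintype.sum_bool] using h1
      set ν : (τ → Bool) × Bool → ℝ := fun a => μ a.1 a.2 with hνdef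
      have hν : ∀ a, 0 ≤ ν a := fun a => hnn _ _
      rcases le_or_gt (μ t false) (μ t true) with hle | hlt
      · -- ideal classifier says true
        have hsep' : μ t false + ε ≤ μ t true := by
          rw [abs_of_nonneg (by linarith)] at hsep; linarith
        set g : (τ → Bool) × Bool → ℝ :=
          fun a => if a = (t, false) then ε else if a = (t, true) then -ε else 0 with hgdef
        have hsub : Finset.univ.filter (badT t) ⊆
            Finset.univ.filter (fun ω : Fin n → ((τ → Bool) × Bool) => 0 ≤ ∑ i, g (ω i)) := by
          intro ω hω
          rw [Finset.mem_filter] at hω ⊢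
          refine ⟨Finset.mem_univ _, ?_⟩
          obtain ⟨-, hbad⟩ := hω.2
          have hlt2 : sCount ω t true < sCount ω t false := by
            by_contra h
            exact hbad (iff_of_true (not_lt.mp h) hle)
          have hsumg : ∑ i, g (ω i)
              = ε * ((sCount ω t false : ℝ) - (sCount ω t true : ℝ)) := by
            rw [sCount_cast, sCount_cast, mul_sub, Finset.mul_sum, Finset.mul_sum,
              ← Finset.sum_sub_distrib]
            refine Finset.sum_congr rfl fun i _ => ?_
            rw [hgdef]
            by_cases hf : ω i = (t, false)
            · have ht' : ω i ≠ (t, true) := by rw [hf]; simp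
              simp [hf, ht']
            · by_cases ht' : ω i = (t, true)
              · simp [hf, ht']
              · simp [hf, ht']
          rw [hsumg]
          have hc : (sCount ω t true : ℝ) < (sCount ω t false : ℝ) := by exact_mod_cast hlt2
          nlinarith
        have hchain := chernoff n ν hν g
        have hbound : ∑ a, ν a * Real.exp (g a) ≤ Real.exp (-(ε ^ 2 / 2)) := by
          have hne : ((t, false) : (τ → Bool) × Bool) ≠ (t, true) := by simp
          have := sum_nu_exp ν (t, false) (t, true) hne ε (-ε)
          rw [hgdef]
          rw [this, hν1]
          have := hoeff ε (μ t true) (μ t false) hε (by linarith) hsep'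
          simpa [hνdef] using this
        calc ∑ ω ∈ Finset.univ.filter (badT t), w ω
            ≤ ∑ ω ∈ Finset.univ.filter
                (fun ω : Fin n → ((τ → Bool) × Bool) => 0 ≤ ∑ i, g (ω i)), w ω :=
              Finset.sum_le_sum_of_subset_of_nonneg hsub (fun ω _ _ => hw ω)
          _ ≤ (∑ a, ν a * Real.exp (g a)) ^ n := hchain
          _ ≤ Real.exp (-(ε ^ 2 / 2)) ^ n := by
              apply pow_le_pow_left₀ _ hbound
              exact Finset.sum_nonneg fun a _ => mul_nonneg (hν a) (Real.exp_nonneg _)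
      · -- ideal classifier says false
        have hsep' : μ t true + ε ≤ μ t false := by
          rw [abs_of_nonpos (by linarith)] at hsep; linarith
        set g : (τ → Bool) × Bool → ℝ :=
          fun a => if a = (t, true) then ε else if a = (t, false) then -ε else 0 with hgdef
        have hsub : Finset.univ.filter (badT t) ⊆
            Finset.univ.filter (fun ω : Fin n → ((τ → Bool) × Bool) => 0 ≤ ∑ i, g (ω i)) := by
          intro ω hω
          rw [Finset.mem_filter] at hω ⊢
          refine ⟨Finset.mem_univ _, ?_⟩
          obtain ⟨-, hbad⟩ := hω.2
          have hle2 : sCount ω t false ≤ sCount ω t true := by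
            by_contra h
            exact hbad (iff_of_false h (not_le.mpr hlt))
          have hsumg : ∑ i, g (ω i)
              = ε * ((sCount ω t true : ℝ) - (sCount ω t false : ℝ)) := by
            rw [sCount_cast, sCount_cast, mul_sub, Finset.mul_sum, Finset.mul_sum,
              ← Finset.sum_sub_distrib]
            refine Finset.sum_congr rfl fun i _ => ?_
            rw [hgdef]
            by_cases hf : ω i = (t, true)
            · have ht' : ω i ≠ (t, false) := by rw [hf]; simp
              simp [hf, ht']
            · by_cases ht' : ω i = (t, false)
              · simp [hf, ht']
              · simp [hf, ht']
          rw [hsumg]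
          have hc : (sCount ω t false : ℝ) ≤ (sCount ω t true : ℝ) := by exact_mod_cast hle2
          nlinarith
        have hchain := chernoff n ν hν g
        have hbound : ∑ a, ν a * Real.exp (g a) ≤ Real.exp (-(ε ^ 2 / 2)) := by
          have hne : ((t, true) : (τ → Bool) × Bool) ≠ (t, false) := by simp
          have := sum_nu_exp ν (t, true) (t, false) hne ε (-ε)
          rw [hgdef]
          rw [this, hν1]
          have := hoeff ε (μ t false) (μ t true) hε (by linarith) hsep'
          simpa [hνdef] using this
        calc ∑ ω ∈ Finset.univ.filter (badT t), w ω
            ≤ ∑ ω ∈ Finset.univ.filter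
                (fun ω : Fin n → ((τ → Bool) × Bool) => 0 ≤ ∑ i, g (ω i)), w ω :=
              Finset.sum_le_sum_of_subset_of_nonneg hsub (fun ω _ _ => hw ω)
          _ ≤ (∑ a, ν a * Real.exp (g a)) ^ n := hchain
          _ ≤ Real.exp (-(ε ^ 2 / 2)) ^ n := by
              apply pow_le_pow_left₀ _ hbound
              exact Finset.sum_nonneg fun a _ => mul_nonneg (hν a) (Real.exp_nonneg _)
    · have hempty : Finset.univ.filter (badT t) = ∅ :=
        Finset.filter_false_of_mem fun ω _ h => hsep h.1
      rw [hempty, Finset.sum_empty]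
      positivity
  -- union bound
  have hub : ∑ ω ∈ Finset.univ.filter (fun ω => ¬ E ω), w ω
      ≤ ∑ t : τ → Bool, ∑ ω ∈ Finset.univ.filter (badT t), w ω := by
    have h1 : ∑ ω ∈ Finset.univ.filter (fun ω => ¬ E ω), w ω
        ≤ ∑ ω ∈ Finset.univ.filter (fun ω => ¬ E ω),
            ∑ t : τ → Bool, (if badT t ω then w ω else 0) := by
      apply Finset.sum_le_sum
      intro ω hω
      have hne := (Finset.mem_filter.mp hω).2
      simp only [hEdef, not_forall, Classical.not_imp] at hne
      obtain ⟨t0, ht0, ht0'⟩ := hne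
      have hwt0 : w ω = if badT t0 ω then w ω else 0 := by
        rw [if_pos (show badT t0 ω from ⟨ht0, ht0'⟩)]
      refine hwt0.le.trans ?_
      exact Finset.single_le_sum (f := fun t => if badT t ω then w ω else 0)
        (fun t _ => by split_ifs with h; exacts [hw ω, le_rfl]) (Finset.mem_univ t0)
    rw [Finset.sum_comm] at h1
    refine h1.trans (Finset.sum_le_sum fun t _ => ?_)
    rw [← Finset.sum_filter]
    apply Finset.sum_le_sum_of_subset_of_nonneg
    · intro ω h
      rw [Finset.mem_filter] at h ⊢
      exact ⟨Finset.mem_univ _, h.2⟩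
    · exact fun ω _ _ => hw ω
  -- numeric bound
  have hC : (0:ℝ) < (2:ℝ) ^ (Fintype.card τ + 1) := by positivity
  have hlog : Real.log ((2:ℝ) ^ (Fintype.card τ + 1) / δ) ≤ (n:ℝ) * (ε ^ 2 / 2) := by
    have hε2 : (0:ℝ) < ε ^ 2 := by positivity
    rw [div_le_iff₀ hε2] at hn
    linarith
  have hexpb : Real.exp (-(ε ^ 2 / 2)) ^ n ≤ δ / 2 ^ (Fintype.card τ + 1) := by
    rw [← Real.exp_nat_mul]
    have h6 : (n:ℝ) * (-(ε ^ 2 / 2)) ≤ Real.log (δ / 2 ^ (Fintype.card τ + 1)) := by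
      rw [Real.log_div (ne_of_gt hδ) (ne_of_gt hC)]
      rw [Real.log_div (ne_of_gt hC) (ne_of_gt hδ)] at hlog
      linarith
    calc Real.exp ((n:ℝ) * (-(ε ^ 2 / 2)))
        ≤ Real.exp (Real.log (δ / 2 ^ (Fintype.card τ + 1))) := Real.exp_le_exp.mpr h6
      _ = δ / 2 ^ (Fintype.card τ + 1) := Real.exp_log (by positivity)
  have hcard : (Fintype.card (τ → Bool) : ℝ) = 2 ^ Fintype.card τ := by
    rw [Fintype.card_fun]; push_cast; simp
  have hsumbound : ∑ t : τ → Bool, ∑ ω ∈ Finset.univ.filter (badT t), w ω ≤ δ := by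
    calc ∑ t : τ → Bool, ∑ ω ∈ Finset.univ.filter (badT t), w ω
        ≤ ∑ _t : τ → Bool, Real.exp (-(ε ^ 2 / 2)) ^ n := Finset.sum_le_sum fun t _ => Ht t
      _ = (Fintype.card (τ → Bool) : ℝ) * Real.exp (-(ε ^ 2 / 2)) ^ n := by
          rw [Finset.sum_const, Finset.card_univ, nsmul_eq_mul]
      _ ≤ (2:ℝ) ^ Fintype.card τ * (δ / 2 ^ (Fintype.card τ + 1)) := by
          rw [hcard]
          apply mul_le_mul_of_nonneg_left hexpb (by positivity)
      _ = δ / 2 := by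
          rw [pow_succ]
          field_simp
      _ ≤ δ := by linarith
  -- assemble
  have hsplit := Finset.sum_filter_add_sum_filter_not Finset.univ E w
  rw [htot] at hsplit
  have hEgood : 1 - δ ≤ ∑ ω ∈ Finset.univ.filter E, w ω := by linarith
  convert hEgood using 2
  congr!
end

section
/- (Corollary on excess risk) Fix a finite vocabulary τ, q ∉ τ, a distribution μ on (τ ∪ {q})-types, and ε, δ > 0. If n ≥ 2^{2|τ|+1} ln(2^{|τ|+1}/δ) / ε², then with probability at least 1 − δ over an i.i.d. sample M of size n from μ, the true error of the empirical ideal classifier satisfies err_μ(φ_id^M) < err_μ(φ_id^μ) + ε. -/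
open scoped Classical
open Finset

/-- True error of a formula w.r.t. a distribution `μ` on (τ ∪ {q})-types: the
probability that the formula disagrees with `q`. -/
noncomputable def errMu {τ : Type} [Fintype τ] [DecidableEq τ]
    (μ : (τ → Bool) → Bool → ℝ) (φ : PropForm τ) : ℝ :=
  ∑ t : τ → Bool, ∑ b : Bool, if φ.eval t ≠ b then μ t b else 0

/-- The ideal classifier: disjunction of all τ-types `t` with `μ(t∧q) ≥ μ(t∧¬q)`. -/
noncomputable def idealClassifier {τ : Type} [Fintype τ] [DecidableEq τ]
    (μ : (τ → Bool) → Bool → ℝ) : PropForm τ :=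
  bigOr (Finset.univ.filter fun t : τ → Bool => μ t false ≤ μ t true) typeForm

open Real

section Analytic
variable {a : ℝ}

private lemma Dpos (ha : 0 ≤ a) (ha1 : a ≤ 1) (u : ℝ) : 0 < 1 - a + a * Real.exp u := by
  rcases eq_or_lt_of_le ha with h | h
  · simp [← h]
  · have : 0 < a * Real.exp u := mul_pos h (Real.exp_pos u)
    nlinarith [this]

/-- ψ u = u²/8 + a u − log(1 − a + a e^u) ≥ 0 -/
private lemma psi_nonneg (ha : 0 ≤ a) (ha1 : a ≤ 1) (u : ℝ) :
    0 ≤ u ^ 2 / 8 + a * u - Real.log (1 - a + a * Real.exp u) := by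
  set D : ℝ → ℝ := fun u => 1 - a + a * Real.exp u with hD
  have hDpos : ∀ u, 0 < D u := Dpos ha ha1
  set ψ : ℝ → ℝ := fun u => u ^ 2 / 8 + a * u - Real.log (D u) with hψ
  set ψ' : ℝ → ℝ := fun u => u / 4 + a - a * Real.exp u / D u with hψ'
  have hDderiv : ∀ u, HasDerivAt D (a * Real.exp u) u := by
    intro u
    exact ((Real.hasDerivAt_exp u).const_mul a).const_add (1 - a)
  have hderiv : ∀ u, HasDerivAt ψ (ψ' u) u := by
    intro u
    have h1 : HasDerivAt (fun u => Real.log (D u)) (a * Real.exp u / D u) u :=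
      (hDderiv u).log (hDpos u).ne'
    have h2 : HasDerivAt (fun u : ℝ => u ^ 2 / 8 + a * u) (u / 4 + a) u := by
      have := ((hasDerivAt_pow 2 u).div_const 8).add ((hasDerivAt_id u).const_mul a)
      exact this.congr_deriv (by rw [show (2:ℕ) - 1 = 1 from rfl]; push_cast; ring)
    exact h2.sub h1
  have hderiv' : ∀ u, HasDerivAt ψ'
      (1 / 4 - (1 - a) * (a * Real.exp u) / (D u) ^ 2) u := by
    intro u
    have h1 : HasDerivAt (fun u => a * Real.exp u / D u)
        ((a * Real.exp u * D u - a * Real.exp u * (a * Real.exp u)) / (D u) ^ 2) u :=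
      ((Real.hasDerivAt_exp u).const_mul a).div (hDderiv u) (hDpos u).ne'
    have h2 : HasDerivAt (fun u : ℝ => u / 4 + a) (1 / 4) u := by
      simpa using ((hasDerivAt_id u).div_const 4).add_const a
    have := h2.sub h1
    refine this.congr_deriv ?_
    have : D u ≠ 0 := (hDpos u).ne'
    rw [show D u = 1 - a + a * Real.exp u from rfl]
    ring
  have hsecond : ∀ u, 0 ≤ 1 / 4 - (1 - a) * (a * Real.exp u) / (D u) ^ 2 := by
    intro u
    rw [sub_nonneg, div_le_iff₀ (pow_pos (hDpos u) 2)]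
    have h : 0 ≤ ((1 - a) - a * Real.exp u) ^ 2 := sq_nonneg _
    have hDu : D u = (1 - a) + a * Real.exp u := rfl
    nlinarith [h]
  have hmono : Monotone ψ' := by
    apply monotone_of_hasDerivAt_nonneg hderiv'
    intro u; exact hsecond u
  have hψ'0 : ψ' 0 = 0 := by simp [hψ', hD]
  have hψ0 : ψ 0 = 0 := by simp [hψ, hD]
  have key : ∀ u, 0 ≤ ψ u := by
    intro u
    rcases le_total 0 u with h | h
    · have hmonoOn : MonotoneOn ψ (Set.Ici (0:ℝ)) := by
        apply monotoneOn_of_hasDerivWithinAt_nonneg (convex_Ici 0)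
          (fun x _ => (hderiv x).continuousAt.continuousWithinAt)
          (fun x hx => (hderiv x).hasDerivWithinAt)
        intro x hx
        have : (0:ℝ) ≤ x := le_of_lt (by simpa using hx)
        calc (0:ℝ) = ψ' 0 := hψ'0.symm
          _ ≤ ψ' x := hmono this
      have := hmonoOn (Set.self_mem_Ici) (by exact h) h
      rwa [hψ0] at this
    · have hantiOn : AntitoneOn ψ (Set.Iic (0:ℝ)) := by
        apply antitoneOn_of_hasDerivWithinAt_nonpos (convex_Iic 0)
          (fun x _ => (hderiv x).continuousAt.continuousWithinAt)
          (fun x hx => (hderiv x).hasDerivWithinAt)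
        intro x hx
        have hx0 : x ≤ (0:ℝ) := le_of_lt (by simpa using hx)
        calc ψ' x ≤ ψ' 0 := hmono hx0
          _ = 0 := hψ'0
      have := hantiOn (by exact h) (Set.self_mem_Iic) h
      rwa [hψ0] at this
  exact key u

lemma hoeff_core (ha : 0 ≤ a) (ha1 : a ≤ 1) (u : ℝ) :
    Real.exp (-(a * u)) * (1 - a + a * Real.exp u) ≤ Real.exp (u ^ 2 / 8) := by
  have hD := Dpos ha ha1 u
  have h := psi_nonneg ha ha1 u
  have : Real.exp (-(a*u)) * (1 - a + a * Real.exp u)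
      = Real.exp (-(a*u) + Real.log (1 - a + a * Real.exp u)) := by
    rw [Real.exp_add, Real.exp_log hD]
  rw [this]
  apply Real.exp_le_exp.2
  linarith

end Analytic
open Finset Real

-- convexity pointwise
lemma exp_le_convex {x l : ℝ} (hx1 : -1 ≤ x) (hx2 : x ≤ 1) :
    Real.exp (l * x) ≤ (1 - x) / 2 * Real.exp (-l) + (1 + x) / 2 * Real.exp l := by
  have h := convexOn_exp.2 (Set.mem_univ (-l)) (Set.mem_univ l)
    (by linarith : (0:ℝ) ≤ (1 - x) / 2) (by linarith : (0:ℝ) ≤ (1 + x) / 2) (by ring)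
  have e : -((1 - x) / 2 * l) + (1 + x) / 2 * l = l * x := by ring
  simpa [smul_eq_mul, e] using h

-- Hoeffding's lemma, finitely supported
lemma mgf_bound {S : Type*} [Fintype S] (p : S → ℝ) (hp : ∀ s, 0 ≤ p s)
    (hsum : ∑ s, p s = 1) (f : S → ℝ) (hf1 : ∀ s, -1 ≤ f s) (hf2 : ∀ s, f s ≤ 1)
    (l : ℝ) :
    ∑ s, p s * Real.exp (l * f s) ≤ Real.exp (l * (∑ s, p s * f s) + l ^ 2 / 2) := by
  set m : ℝ := ∑ s, p s * f s with hm
  have hm1 : -1 ≤ m := by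
    rw [hm, ← hsum]
    calc -∑ s, p s = ∑ s, p s * (-1) := by rw [← Finset.sum_neg_distrib]; simp [mul_comm]
      _ ≤ ∑ s, p s * f s := Finset.sum_le_sum fun s _ => by
          exact mul_le_mul_of_nonneg_left (hf1 s) (hp s)
  have hm2 : m ≤ 1 := by
    rw [hm, ← hsum]
    exact Finset.sum_le_sum fun s _ => by
      simpa using mul_le_mul_of_nonneg_left (hf2 s) (hp s)
  have step1 : ∑ s, p s * Real.exp (l * f s)
      ≤ (1 - m) / 2 * Real.exp (-l) + (1 + m) / 2 * Real.exp l := by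
    have : ∑ s, p s * Real.exp (l * f s)
        ≤ ∑ s, p s * ((1 - f s) / 2 * Real.exp (-l) + (1 + f s) / 2 * Real.exp l) :=
      Finset.sum_le_sum fun s _ =>
        mul_le_mul_of_nonneg_left (exp_le_convex (hf1 s) (hf2 s)) (hp s)
    refine this.trans_eq ?_
    have expand : ∀ s, p s * ((1 - f s) / 2 * Real.exp (-l) + (1 + f s) / 2 * Real.exp l)
        = (p s / 2) * Real.exp (-l) + (p s * f s / 2) * (Real.exp l - Real.exp (-l))
          + (p s / 2) * Real.exp l := fun s => by ring
    rw [Finset.sum_congr rfl fun s _ => expand s]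
    rw [Finset.sum_add_distrib, Finset.sum_add_distrib, ← Finset.sum_mul, ← Finset.sum_mul,
      ← Finset.sum_mul, ← Finset.sum_div, ← Finset.sum_div, hsum, ← hm]
    ring
  refine step1.trans ?_
  -- reduce to hoeff_core with a = (1+m)/2, u = 2l
  have ha : 0 ≤ (1 + m) / 2 := by linarith
  have ha1 : (1 + m) / 2 ≤ 1 := by linarith
  have key := hoeff_core ha ha1 (2 * l)
  have hrw : Real.exp (-((1 + m) / 2 * (2 * l))) *
      (1 - (1 + m) / 2 + (1 + m) / 2 * Real.exp (2 * l))
      = Real.exp (-(l * m)) * ((1 - m) / 2 * Real.exp (-l) + (1 + m) / 2 * Real.exp l) := by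
    rw [show -((1 + m) / 2 * (2 * l)) = -(l*m) + -l by ring, Real.exp_add]
    rw [show Real.exp (2*l) = Real.exp l * Real.exp l by rw [← Real.exp_add]; ring_nf]
    have h1 : Real.exp (-l) * Real.exp l = 1 := by rw [← Real.exp_add]; simp
    linear_combination (Real.exp (-(l*m)) * (1+m)/2 * Real.exp l) * h1
  rw [hrw] at key
  have h28 : (2 * l) ^ 2 / 8 = l ^ 2 / 2 := by ring
  rw [h28] at key
  have hpos : (0:ℝ) < Real.exp (l * m) := Real.exp_pos _
  have : (1 - m) / 2 * Real.exp (-l) + (1 + m) / 2 * Real.exp l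
      = Real.exp (l * m) * (Real.exp (-(l * m)) *
        ((1 - m) / 2 * Real.exp (-l) + (1 + m) / 2 * Real.exp l)) := by
    rw [← mul_assoc, ← Real.exp_add]; simp
  rw [this, Real.exp_add]
  exact mul_le_mul_of_nonneg_left key hpos.le

lemma sum_prod_pow {S : Type*} [Fintype S] (n : ℕ) (h : S → ℝ) :
    ∑ ω : Fin n → S, ∏ i, h (ω i) = (∑ s, h s) ^ n := by
  induction n with
  | zero => simp
  | succ n ih =>
    rw [← (Fin.consEquiv (fun _ => S)).sum_comp (fun ω => ∏ i, h (ω i))]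
    rw [Fintype.sum_prod_type]
    have : ∀ (x : S) (ω' : Fin n → S),
        ∏ i, h (((Fin.consEquiv (fun _ => S)) (x, ω')) i) = h x * ∏ i, h (ω' i) := by
      intro x ω'
      rw [Fin.prod_univ_succ]
      simp [Fin.consEquiv, Fin.cons_zero, Fin.cons_succ]
    simp_rw [this, ← Finset.mul_sum, ← Finset.sum_mul, ih, pow_succ, mul_comm]
section Prob
variable {τ : Type} [Fintype τ] [DecidableEq τ] {n : ℕ} (μ : (τ → Bool) → Bool → ℝ)

lemma prob_nonneg (hnn : ∀ t b, 0 ≤ μ t b) (E : (Fin n → ((τ → Bool) × Bool)) → Prop) :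
    0 ≤ prob μ E :=
  Finset.sum_nonneg fun ω _ => Finset.prod_nonneg fun i _ => hnn _ _

lemma sum_univ_mu (hsum : ∑ t : τ → Bool, ∑ b : Bool, μ t b = 1) :
    ∑ s : (τ → Bool) × Bool, μ s.1 s.2 = 1 := by
  rw [Fintype.sum_prod_type]; exact hsum

lemma prob_true (hsum : ∑ t : τ → Bool, ∑ b : Bool, μ t b = 1) :
    prob (n := n) μ (fun _ => True) = 1 := by
  unfold prob
  rw [Finset.sum_filter]
  simp only [if_true]
  rw [sum_prod_pow n (fun s : (τ → Bool) × Bool => μ s.1 s.2), sum_univ_mu μ hsum, one_pow]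

lemma prob_mono (hnn : ∀ t b, 0 ≤ μ t b) {E F : (Fin n → ((τ → Bool) × Bool)) → Prop}
    (h : ∀ ω, E ω → F ω) : prob μ E ≤ prob μ F := by
  unfold prob
  rw [Finset.sum_filter, Finset.sum_filter]
  apply Finset.sum_le_sum
  intro ω _
  have hW : 0 ≤ ∏ i, μ (ω i).1 (ω i).2 := Finset.prod_nonneg fun i _ => hnn _ _
  split_ifs with h1 h2
  · exact le_rfl
  · exact absurd (h ω h1) h2
  · exact hW
  · exact le_rfl

lemma prob_compl (hsum : ∑ t : τ → Bool, ∑ b : Bool, μ t b = 1)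
    (E : (Fin n → ((τ → Bool) × Bool)) → Prop) :
    prob μ E + prob μ (fun ω => ¬ E ω) = 1 := by
  unfold prob
  rw [Finset.sum_filter, Finset.sum_filter, ← Finset.sum_add_distrib]
  rw [show (1:ℝ) = (∑ s : (τ → Bool) × Bool, μ s.1 s.2) ^ n by
    rw [sum_univ_mu μ hsum, one_pow]]
  rw [← sum_prod_pow n (fun s : (τ → Bool) × Bool => μ s.1 s.2)]
  apply Finset.sum_congr rfl
  intro ω _
  by_cases h : E ω <;> simp [h]

lemma prob_or_le (hnn : ∀ t b, 0 ≤ μ t b) (E F : (Fin n → ((τ → Bool) × Bool)) → Prop) :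
    prob μ (fun ω => E ω ∨ F ω) ≤ prob μ E + prob μ F := by
  unfold prob
  rw [Finset.sum_filter, Finset.sum_filter, Finset.sum_filter, ← Finset.sum_add_distrib]
  apply Finset.sum_le_sum
  intro ω _
  have hW : 0 ≤ ∏ i, μ (ω i).1 (ω i).2 := Finset.prod_nonneg fun i _ => hnn _ _
  split_ifs <;> simp_all <;> linarith

lemma prob_exists_le (hnn : ∀ t b, 0 ≤ μ t b)
    (B : (τ → Bool) → (Fin n → ((τ → Bool) × Bool)) → Prop) :
    prob μ (fun ω => ∃ t, B t ω) ≤ ∑ t : τ → Bool, prob μ (B t) := by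
  classical
  have key : ∀ s : Finset (τ → Bool),
      prob μ (fun ω => ∃ t ∈ s, B t ω) ≤ ∑ t ∈ s, prob μ (B t) := by
    intro s
    induction s using Finset.cons_induction with
    | empty =>
      have h0 : prob (n := n) μ (fun ω => ∃ t ∈ (∅ : Finset (τ → Bool)), B t ω)
          ≤ prob (n := n) μ (fun _ => False) := prob_mono μ hnn (by simp)
      have h1 : prob (n := n) μ (fun _ => False) = 0 := by
        unfold prob
        rw [Finset.sum_filter]
        apply Finset.sum_eq_zero
        intro ω _; simp
      simp only [Finset.sum_empty]
      exact le_trans h0 (le_of_eq h1)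
    | cons a s ha ih =>
      have h1 : prob μ (fun ω => ∃ t ∈ Finset.cons a s ha, B t ω)
          ≤ prob μ (fun ω => B a ω ∨ ∃ t ∈ s, B t ω) := by
        apply prob_mono μ hnn
        intro ω hω
        obtain ⟨t, ht, hB⟩ := hω
        rcases Finset.mem_cons.1 ht with rfl | h
        · exact Or.inl hB
        · exact Or.inr ⟨t, h, hB⟩
      calc prob μ (fun ω => ∃ t ∈ Finset.cons a s ha, B t ω)
          ≤ prob μ (fun ω => B a ω ∨ ∃ t ∈ s, B t ω) := h1
        _ ≤ prob μ (B a) + prob μ (fun ω => ∃ t ∈ s, B t ω) := prob_or_le μ hnn _ _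
        _ ≤ prob μ (B a) + ∑ t ∈ s, prob μ (B t) := by linarith [ih]
        _ = ∑ t ∈ Finset.cons a s ha, prob μ (B t) := by rw [Finset.sum_cons]
  calc prob μ (fun ω => ∃ t, B t ω)
      ≤ prob μ (fun ω => ∃ t ∈ (Finset.univ : Finset (τ → Bool)), B t ω) := by
        apply prob_mono μ hnn; intro ω ⟨t, ht⟩; exact ⟨t, Finset.mem_univ t, ht⟩
    _ ≤ _ := key Finset.univ

end Prob
section Chernoff
variable {τ : Type} [Fintype τ] [DecidableEq τ] {n : ℕ} (μ : (τ → Bool) → Bool → ℝ)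

lemma chernoff_s9 (hnn : ∀ t b, 0 ≤ μ t b) (f : ((τ → Bool) × Bool) → ℝ) (c l : ℝ)
    (hl : 0 ≤ l) :
    prob (n := n) μ (fun ω => c ≤ ∑ i, f (ω i))
      ≤ Real.exp (-(l * c)) *
        (∑ s : (τ → Bool) × Bool, μ s.1 s.2 * Real.exp (l * f s)) ^ n := by
  unfold prob
  rw [Finset.sum_filter]
  have key : ∀ ω : Fin n → ((τ → Bool) × Bool),
      (∏ i, μ (ω i).1 (ω i).2 * Real.exp (l * f (ω i)))
        = (∏ i, μ (ω i).1 (ω i).2) * Real.exp (l * ∑ i, f (ω i)) := by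
    intro ω
    rw [Finset.prod_mul_distrib, ← Real.exp_sum, Finset.mul_sum]
  have step : ∀ ω : Fin n → ((τ → Bool) × Bool),
      (if c ≤ ∑ i, f (ω i) then ∏ i, μ (ω i).1 (ω i).2 else 0)
        ≤ Real.exp (-(l * c)) * ∏ i, μ (ω i).1 (ω i).2 * Real.exp (l * f (ω i)) := by
    intro ω
    have hW : 0 ≤ ∏ i, μ (ω i).1 (ω i).2 := Finset.prod_nonneg fun i _ => hnn _ _
    rw [key ω]
    split_ifs with h
    · have h1 : (1:ℝ) ≤ Real.exp (-(l * c)) * Real.exp (l * ∑ i, f (ω i)) := by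
        rw [← Real.exp_add]
        apply Real.one_le_exp
        nlinarith [h, hl]
      calc (∏ i, μ (ω i).1 (ω i).2)
          = (∏ i, μ (ω i).1 (ω i).2) * 1 := by ring
        _ ≤ (∏ i, μ (ω i).1 (ω i).2) *
            (Real.exp (-(l * c)) * Real.exp (l * ∑ i, f (ω i))) :=
            mul_le_mul_of_nonneg_left h1 hW
        _ = Real.exp (-(l * c)) *
            ((∏ i, μ (ω i).1 (ω i).2) * Real.exp (l * ∑ i, f (ω i))) := by ring
    · positivity
  calc ∑ ω : Fin n → ((τ → Bool) × Bool),
        (if c ≤ ∑ i, f (ω i) then ∏ i, μ (ω i).1 (ω i).2 else 0)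
      ≤ ∑ ω : Fin n → ((τ → Bool) × Bool),
        Real.exp (-(l * c)) * ∏ i, μ (ω i).1 (ω i).2 * Real.exp (l * f (ω i)) :=
        Finset.sum_le_sum fun ω _ => step ω
    _ = Real.exp (-(l * c)) * ∑ ω : Fin n → ((τ → Bool) × Bool),
          ∏ i, μ (ω i).1 (ω i).2 * Real.exp (l * f (ω i)) := by rw [Finset.mul_sum]
    _ = _ := by
        rw [sum_prod_pow n (fun s : (τ → Bool) × Bool => μ s.1 s.2 * Real.exp (l * f s))]

lemma tail_bound (hnn : ∀ t b, 0 ≤ μ t b)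
    (hsum : ∑ t : τ → Bool, ∑ b : Bool, μ t b = 1)
    (f : ((τ → Bool) × Bool) → ℝ) (hf1 : ∀ s, -1 ≤ f s) (hf2 : ∀ s, f s ≤ 1)
    (η : ℝ) (hη : 0 < η) :
    prob (n := n) μ (fun ω =>
        (n : ℝ) * ((∑ s : (τ → Bool) × Bool, μ s.1 s.2 * f s) + η) ≤ ∑ i, f (ω i))
      ≤ Real.exp (-((n : ℝ) * η ^ 2 / 2)) := by
  set m : ℝ := ∑ s : (τ → Bool) × Bool, μ s.1 s.2 * f s with hm
  have h1 := chernoff_s9 (n := n) μ hnn f ((n : ℝ) * (m + η)) η hη.le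
  have h2 : ∑ s : (τ → Bool) × Bool, μ s.1 s.2 * Real.exp (η * f s)
      ≤ Real.exp (η * m + η ^ 2 / 2) :=
    mgf_bound (fun s : (τ → Bool) × Bool => μ s.1 s.2) (fun s => hnn _ _)
      (sum_univ_mu μ hsum) f hf1 hf2 η
  have h3 : (∑ s : (τ → Bool) × Bool, μ s.1 s.2 * Real.exp (η * f s)) ^ n
      ≤ Real.exp (η * m + η ^ 2 / 2) ^ n := by
    apply pow_le_pow_left₀ _ h2
    exact Finset.sum_nonneg fun s _ => mul_nonneg (hnn _ _) (Real.exp_pos _).le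
  calc prob (n := n) μ (fun ω => (n : ℝ) * (m + η) ≤ ∑ i, f (ω i))
      ≤ Real.exp (-(η * ((n : ℝ) * (m + η)))) *
        (∑ s : (τ → Bool) × Bool, μ s.1 s.2 * Real.exp (η * f s)) ^ n := h1
    _ ≤ Real.exp (-(η * ((n : ℝ) * (m + η)))) * Real.exp (η * m + η ^ 2 / 2) ^ n := by
        exact mul_le_mul_of_nonneg_left h3 (Real.exp_pos _).le
    _ = Real.exp (-((n : ℝ) * η ^ 2 / 2)) := by
        rw [← Real.exp_nat_mul, ← Real.exp_add]
        congr 1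
        ring

end Chernoff
section Bad
variable {τ : Type} [Fintype τ] [DecidableEq τ] {n : ℕ} (μ : (τ → Bool) → Bool → ℝ)

/-- the ±1 indicator for type `t` -/
noncomputable def ftype (t : τ → Bool) (s : (τ → Bool) × Bool) : ℝ :=
  (if s = (t, true) then 1 else 0) - (if s = (t, false) then 1 else 0)

lemma ftype_bdd1 (t : τ → Bool) (s : (τ → Bool) × Bool) : -1 ≤ ftype t s := by
  unfold ftype; split_ifs <;> norm_num

lemma ftype_bdd2 (t : τ → Bool) (s : (τ → Bool) × Bool) : ftype t s ≤ 1 := by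
  unfold ftype; split_ifs <;> norm_num

lemma sum_ftype_count (t : τ → Bool) (ω : Fin n → ((τ → Bool) × Bool)) :
    ∑ i, ftype t (ω i) = (sCount ω t true : ℝ) - (sCount ω t false : ℝ) := by
  unfold ftype sCount
  rw [Finset.sum_sub_distrib]
  congr 1 <;> rw [Finset.sum_boole] <;> norm_num

lemma mean_ftype (t : τ → Bool) :
    ∑ s : (τ → Bool) × Bool, μ s.1 s.2 * ftype t s = μ t true - μ t false := by
  unfold ftype
  rw [Fintype.sum_prod_type]
  rw [Finset.sum_eq_single t]
  · simp; ring
  · intro t' _ hne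
    have h1 : ∀ b : Bool, (t', b) ≠ (t, true) ∨ b = true := by
      intro b; by_cases hb : b = true
      · right; exact hb
      · left; simp [Prod.ext_iff]; tauto
    simp [Prod.ext_iff, hne]
  · intro h; exact absurd (Finset.mem_univ t) h

lemma bad_bound (hnn : ∀ t b, 0 ≤ μ t b)
    (hsum : ∑ t : τ → Bool, ∑ b : Bool, μ t b = 1) (η : ℝ) (hη : 0 < η) (t : τ → Bool) :
    prob (n := n) μ (fun ω =>
        (η ≤ μ t true - μ t false ∧ sCount ω t true < sCount ω t false) ∨
        (μ t true - μ t false ≤ -η ∧ sCount ω t false ≤ sCount ω t true))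
      ≤ Real.exp (-((n : ℝ) * η ^ 2 / 2)) := by
  by_cases h1 : η ≤ μ t true - μ t false
  · -- use g = -ftype t
    have hmean : ∑ s : (τ → Bool) × Bool, μ s.1 s.2 * (-(ftype t s))
        = -(μ t true - μ t false) := by
      simp_rw [mul_neg, Finset.sum_neg_distrib, mean_ftype μ t]
    have hT := tail_bound (n := n) μ hnn hsum (fun s => -(ftype t s))
      (fun s => by show -1 ≤ -ftype t s; linarith [ftype_bdd2 t s])
      (fun s => by show -ftype t s ≤ 1; linarith [ftype_bdd1 t s]) η hη
    refine le_trans (prob_mono μ hnn ?_) (le_of_eq rfl) |>.trans hT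
    intro ω hω
    rcases hω with ⟨_, hc⟩ | ⟨hm, _⟩
    · show (n : ℝ) * ((∑ s : (τ → Bool) × Bool, μ s.1 s.2 * (-(ftype t s))) + η)
        ≤ ∑ i, -(ftype t (ω i))
      rw [hmean, Finset.sum_neg_distrib, sum_ftype_count t ω]
      have hcR : (sCount ω t true : ℝ) < (sCount ω t false : ℝ) := by exact_mod_cast hc
      have hn0 : (0:ℝ) ≤ (n : ℝ) := Nat.cast_nonneg n
      nlinarith
    · linarith
  · by_cases h2 : μ t true - μ t false ≤ -η
    · have hT := tail_bound (n := n) μ hnn hsum (ftype t)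
        (ftype_bdd1 t) (ftype_bdd2 t) η hη
      refine le_trans (prob_mono μ hnn ?_) hT
      intro ω hω
      rcases hω with ⟨hm, _⟩ | ⟨_, hc⟩
      · exact absurd hm h1
      · show (n : ℝ) * ((∑ s : (τ → Bool) × Bool, μ s.1 s.2 * ftype t s) + η)
          ≤ ∑ i, ftype t (ω i)
        rw [mean_ftype μ t, sum_ftype_count t ω]
        have hcR : (sCount ω t false : ℝ) ≤ (sCount ω t true : ℝ) := by exact_mod_cast hc
        have hn0 : (0:ℝ) ≤ (n : ℝ) := Nat.cast_nonneg n
        nlinarith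
    · have hempty : prob (n := n) μ (fun ω =>
          (η ≤ μ t true - μ t false ∧ sCount ω t true < sCount ω t false) ∨
          (μ t true - μ t false ≤ -η ∧ sCount ω t false ≤ sCount ω t true))
          ≤ prob (n := n) μ (fun _ => False) := by
        apply prob_mono μ hnn
        rintro ω (⟨hm, _⟩ | ⟨hm, _⟩)
        · exact h1 hm
        · exact h2 hm
      have h0 : prob (n := n) μ (fun _ => False) = 0 := by
        unfold prob
        rw [Finset.sum_filter]
        exact Finset.sum_eq_zero fun ω _ => by simp
      refine le_trans hempty ?_
      rw [h0]
      positivity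

end Bad
section Eval
variable {τ : Type} [Fintype τ] [DecidableEq τ]

lemma eval_foldr_or {β : Type} (f : β → PropForm τ) (v : τ → Bool) (l : List β) :
    (l.foldr (fun b acc => PropForm.or (f b) acc) PropForm.fls).eval v = true
      ↔ ∃ b ∈ l, (f b).eval v = true := by
  induction l with
  | nil => simp [PropForm.eval]
  | cons a l ih => simp [PropForm.eval, ih]

lemma eval_bigOr {β : Type} (s : Finset β) (f : β → PropForm τ) (v : τ → Bool) :
    (bigOr s f).eval v = true ↔ ∃ b ∈ s, (f b).eval v = true := by
  unfold bigOr
  rw [eval_foldr_or]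
  constructor
  · rintro ⟨b, hb, h⟩; exact ⟨b, Finset.mem_toList.1 hb, h⟩
  · rintro ⟨b, hb, h⟩; exact ⟨b, Finset.mem_toList.2 hb, h⟩

lemma eval_foldr_and (t t' : τ → Bool) (l : List τ) :
    (l.foldr (fun p acc => PropForm.and
        (cond (t' p) (PropForm.var p) (PropForm.neg (PropForm.var p))) acc)
      PropForm.tru).eval t = true ↔ ∀ p ∈ l, t p = t' p := by
  induction l with
  | nil => simp [PropForm.eval]
  | cons a l ih =>
    simp only [List.foldr_cons, PropForm.eval, Bool.and_eq_true, ih, List.mem_cons]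
    constructor
    · rintro ⟨h1, h2⟩ p hp
      rcases hp with rfl | hp
      · cases ha : t' p <;> rw [ha] at h1 <;> simp [PropForm.eval] at h1 <;> simp [h1]
      · exact h2 p hp
    · intro h
      refine ⟨?_, fun p hp => h p (Or.inr hp)⟩
      have := h a (Or.inl rfl)
      cases ha : t' a <;> rw [ha] at this <;> simp [PropForm.eval, this]

lemma eval_typeForm (t t' : τ → Bool) :
    (typeForm t').eval t = true ↔ t = t' := by
  unfold typeForm
  rw [eval_foldr_and]
  constructor
  · intro h; funext p; exact h p (Finset.mem_toList.2 (Finset.mem_univ p))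
  · rintro rfl p _; rfl

lemma eval_bigOr_typeForm (T : Finset (τ → Bool)) (t : τ → Bool) :
    (bigOr T typeForm).eval t = (decide (t ∈ T)) := by
  by_cases h : t ∈ T
  · simp only [h, decide_true]
    exact (eval_bigOr T typeForm t).2 ⟨t, h, (eval_typeForm t t).2 rfl⟩
  · simp only [h, decide_false]
    by_contra hc
    have : (bigOr T typeForm).eval t = true := by
      cases he : (bigOr T typeForm).eval t
      · exact absurd he hc
      · rfl
    obtain ⟨t', ht', hev⟩ := (eval_bigOr T typeForm t).1 this
    rw [(eval_typeForm t t').1 hev] at h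
    exact h ht'

lemma errMu_bigOr (μ : (τ → Bool) → Bool → ℝ) (T : Finset (τ → Bool)) :
    errMu μ (bigOr T typeForm)
      = ∑ t : τ → Bool, (if t ∈ T then μ t false else μ t true) := by
  unfold errMu
  apply Finset.sum_congr rfl
  intro t _
  rw [Fintype.sum_bool]
  by_cases h : t ∈ T
  · rw [eval_bigOr_typeForm]
    simp [h]
  · rw [eval_bigOr_typeForm]
    simp [h]

end Eval

/-- Corollary on excess risk: if `n ≥ 2^{2|τ|+1} ln(2^{|τ|+1}/δ)/ε²`, then with
probability at least `1 − δ` over an i.i.d. sample of size `n`, the true error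
of the empirical ideal classifier is within `ε` of that of the ideal classifier. -/
theorem stmt9 {τ : Type} [Fintype τ] [DecidableEq τ] (n : ℕ)
    (μ : (τ → Bool) → Bool → ℝ)
    (hnn : ∀ t b, 0 ≤ μ t b)
    (hsum : ∑ t : τ → Bool, ∑ b : Bool, μ t b = 1)
    (ε δ : ℝ) (hε : 0 < ε) (hδ : 0 < δ)
    (hn : (2 : ℝ) ^ (2 * Fintype.card τ + 1) *
        Real.log ((2 : ℝ) ^ (Fintype.card τ + 1) / δ) / ε ^ 2 ≤ (n : ℝ)) :
    1 - δ ≤ prob μ (fun ω : Fin n → ((τ → Bool) × Bool) =>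
      errMu μ (bigOr (Finset.univ.filter fun t : τ → Bool =>
          sCount ω t false ≤ sCount ω t true) typeForm)
        < errMu μ (idealClassifier μ) + ε) := by
  classical
  set k := Fintype.card τ with hk
  have h2k : (0:ℝ) < 2 ^ k := by positivity
  set η : ℝ := ε / 2 ^ k with hηdef
  have hηpos : 0 < η := div_pos hε h2k
  set Bad : (τ → Bool) → (Fin n → ((τ → Bool) × Bool)) → Prop := fun t ω =>
    (η ≤ μ t true - μ t false ∧ sCount ω t true < sCount ω t false) ∨
    (μ t true - μ t false ≤ -η ∧ sCount ω t false ≤ sCount ω t true) with hBad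
  -- exponential bound
  have hR : (0:ℝ) < 2 ^ (k + 1) / δ := by positivity
  have hlog : Real.log ((2:ℝ) ^ (k + 1) / δ) ≤ (n : ℝ) * ε ^ 2 / 2 ^ (2 * k + 1) := by
    have hε2 : (0:ℝ) < ε ^ 2 := by positivity
    rw [div_le_iff₀ hε2] at hn
    rw [le_div_iff₀ (by positivity : (0:ℝ) < 2 ^ (2 * k + 1))]
    nlinarith [hn]
  have hexpid : (n : ℝ) * η ^ 2 / 2 = (n : ℝ) * ε ^ 2 / 2 ^ (2 * k + 1) := by
    rw [hηdef]
    have : (2:ℝ) ^ (2 * k + 1) = 2 ^ k * 2 ^ k * 2 := by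
      rw [pow_succ, two_mul, pow_add]
    rw [this]
    field_simp
  have hexp : Real.exp (-((n : ℝ) * η ^ 2 / 2)) ≤ δ / 2 ^ (k + 1) := by
    have h1 : Real.exp (-((n : ℝ) * η ^ 2 / 2))
        ≤ Real.exp (-(Real.log ((2:ℝ) ^ (k + 1) / δ))) := by
      apply Real.exp_le_exp.2
      rw [hexpid]
      linarith
    have h2 : Real.exp (-(Real.log ((2:ℝ) ^ (k + 1) / δ))) = δ / 2 ^ (k + 1) := by
      rw [Real.exp_neg, Real.exp_log hR, inv_div]
    linarith
  -- union bound
  have hbadsum : prob μ (fun ω => ∃ t, Bad t ω) ≤ δ := by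
    have h1 : prob μ (fun ω => ∃ t, Bad t ω) ≤ ∑ t : τ → Bool, prob μ (Bad t) :=
      prob_exists_le μ hnn Bad
    have h2 : ∑ t : τ → Bool, prob μ (Bad t)
        ≤ ∑ _t : τ → Bool, Real.exp (-((n : ℝ) * η ^ 2 / 2)) := by
      apply Finset.sum_le_sum
      intro t _
      exact bad_bound μ hnn hsum η hηpos t
    have h3 : ∑ _t : τ → Bool, Real.exp (-((n : ℝ) * η ^ 2 / 2))
        = (2:ℝ) ^ k * Real.exp (-((n : ℝ) * η ^ 2 / 2)) := by
      rw [Finset.sum_const, Finset.card_univ, nsmul_eq_mul]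
      congr 1
      rw [Fintype.card_fun]
      push_cast
      simp [hk]
    have h4 : (2:ℝ) ^ k * Real.exp (-((n : ℝ) * η ^ 2 / 2))
        ≤ (2:ℝ) ^ k * (δ / 2 ^ (k + 1)) :=
      mul_le_mul_of_nonneg_left hexp h2k.le
    have h5 : (2:ℝ) ^ k * (δ / 2 ^ (k + 1)) = δ / 2 := by
      rw [pow_succ]
      field_simp
    linarith
  -- deterministic part
  have hdet : ∀ ω : Fin n → ((τ → Bool) × Bool), ¬ (∃ t, Bad t ω) →
      errMu μ (bigOr (Finset.univ.filter fun t : τ → Bool =>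
          sCount ω t false ≤ sCount ω t true) typeForm)
        < errMu μ (idealClassifier μ) + ε := by
    intro ω hG
    push_neg at hG
    unfold idealClassifier
    rw [errMu_bigOr, errMu_bigOr]
    have hεeq : ε = ∑ _t : τ → Bool, η := by
      rw [Finset.sum_const, Finset.card_univ, nsmul_eq_mul, Fintype.card_fun]
      rw [Fintype.card_bool, hηdef]
      push_cast
      rw [← hk]
      field_simp
    rw [hεeq, ← Finset.sum_add_distrib]
    apply Finset.sum_lt_sum_of_nonempty Finset.univ_nonempty
    intro t _
    have hB1 : η ≤ μ t true - μ t false → ¬ (sCount ω t true < sCount ω t false) :=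
      fun h hh => hG t (Or.inl ⟨h, hh⟩)
    have hB2 : μ t true - μ t false ≤ -η → ¬ (sCount ω t false ≤ sCount ω t true) :=
      fun h hh => hG t (Or.inr ⟨h, hh⟩)
    by_cases hmem : sCount ω t false ≤ sCount ω t true
      <;> by_cases hmem' : μ t false ≤ μ t true
      <;> simp only [Finset.mem_filter, Finset.mem_univ, true_and]
    · rw [if_pos hmem, if_pos hmem']; linarith
    · rw [if_pos hmem, if_neg hmem']
      have h1 : ¬ (μ t true - μ t false ≤ -η) := fun hc => hB2 hc hmem
      push_neg at h1
      linarith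
    · rw [if_neg hmem, if_pos hmem']
      push_neg at hmem
      have h1 : ¬ (η ≤ μ t true - μ t false) := fun hc => hB1 hc hmem
      push_neg at h1
      linarith
    · rw [if_neg hmem, if_neg hmem']
      linarith
  have hcompl := prob_compl μ hsum (fun ω => ∃ t, Bad t ω)
  have hG : 1 - δ ≤ prob μ (fun ω => ¬ ∃ t, Bad t ω) := by linarith
  refine le_trans hG (prob_mono μ hnn ?_)
  intro ω hω
  exact hdet ω hω
end

section
/- If φ is any formula over τ that agrees with the ideal classifier on every τ-type (i.e., for all τ-types t, t ⊨ φ iff μ(t ∧ q) ≥ μ(t ∧ ¬q)), then err_μ(φ) = err_μ(φ_id^μ). Conversely, if err_μ(φ) = err_μ(φ_id^μ) and μ strictly ε-separates every τ-type for some ε > 0, then φ is logically equivalent to φ_id^μ. -/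
/-!
On each τ-type `t` a formula with value `b` errs with probability `μ t (!b)`, and the ideal
classifier picks the value making this the smaller of `μ t true`, `μ t false`. So its error is a
sum of pointwise minima: any formula agreeing with it has the same error, and a formula with the
same error must attain the minimum on every type, which under strict separation fixes its value.
-/

open scoped Classical
open Finset

namespace PropForm

variable {α β : Type}

lemma eval_bigOr (s : Finset β) (f : β → PropForm α) (v : α → Bool) :
    (bigOr s f).eval v = true ↔ ∃ b ∈ s, (f b).eval v = true := by
  have foldr_or : ∀ l : List β,
      (l.foldr (fun b acc => or (f b) acc) fls).eval v = true ↔ ∃ b ∈ l, (f b).eval v = true := by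
    intro l
    induction l with
    | nil => simp [eval]
    | cons a l ih => simp [eval, ih]
  simp [bigOr, foldr_or]

lemma eval_literal (t v : α → Bool) (p : α) :
    (cond (t p) (var p) (neg (var p))).eval v = true ↔ v p = t p := by
  cases t p <;> simp [eval]

lemma eval_typeForm [Fintype α] (t v : α → Bool) :
    (typeForm t).eval v = true ↔ v = t := by
  have foldr_and : ∀ l : List α,
      (l.foldr (fun p acc => and (cond (t p) (var p) (neg (var p))) acc) tru).eval v = true
        ↔ ∀ p ∈ l, v p = t p := by
    intro l
    induction l with
    | nil => simp [eval]
    | cons a l ih => simp [eval, eval_literal, ih]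
  simp [typeForm, foldr_and, funext_iff]

end PropForm

section IdealClassifier

variable {τ : Type} [Fintype τ] [DecidableEq τ] (μ : (τ → Bool) → Bool → ℝ)

lemma eval_idealClassifier (v : τ → Bool) :
    (idealClassifier μ).eval v = decide (μ v false ≤ μ v true) := by
  rw [Bool.eq_iff_iff, idealClassifier, PropForm.eval_bigOr, decide_eq_true_iff]
  simp [PropForm.eval_typeForm]

lemma errMu_eq_sum (φ : PropForm τ) : errMu μ φ = ∑ t, μ t (!φ.eval t) := by
  refine sum_congr rfl fun t _ => ?_
  cases φ.eval t <;> simp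

lemma apply_not_eval_idealClassifier_le (t : τ → Bool) (b : Bool) :
    μ t (!(idealClassifier μ).eval t) ≤ μ t (!b) := by
  rw [eval_idealClassifier]
  by_cases h : μ t false ≤ μ t true
  · cases b <;> simp [h]
  · cases b <;> simp [h, (not_le.mp h).le]

lemma errMu_eq_idealClassifier_of_eval_eq {φ : PropForm τ}
    (hφ : ∀ t, φ.eval t = (idealClassifier μ).eval t) :
    errMu μ φ = errMu μ (idealClassifier μ) := by
  simp only [errMu_eq_sum, hφ]

lemma eval_eq_idealClassifier_of_errMu_eq {φ : PropForm τ}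
    (hsep : ∀ t, μ t true ≠ μ t false) (herr : errMu μ φ = errMu μ (idealClassifier μ))
    (v : τ → Bool) :
    φ.eval v = (idealClassifier μ).eval v := by
  rw [errMu_eq_sum, errMu_eq_sum, eq_comm,
    sum_eq_sum_iff_of_le fun t _ => apply_not_eval_idealClassifier_le μ t _] at herr
  have hv := herr v (mem_univ v)
  by_contra hne
  cases hφ : φ.eval v <;> cases hid : (idealClassifier μ).eval v <;> simp_all [eq_comm]

end IdealClassifier

theorem stmt10_general {τ : Type} [Fintype τ] [DecidableEq τ]
    (μ : (τ → Bool) → Bool → ℝ)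
    (φ : PropForm τ) :
    ((∀ t : τ → Bool, (φ.eval t = true ↔ μ t false ≤ μ t true)) →
      errMu μ φ = errMu μ (idealClassifier μ)) ∧
    (errMu μ φ = errMu μ (idealClassifier μ) →
      (∃ ε > (0 : ℝ), ∀ t : τ → Bool, ε ≤ |μ t true - μ t false|) →
      ∀ v : τ → Bool, φ.eval v = (idealClassifier μ).eval v) := by
  refine ⟨fun hagree => ?_, fun herr ⟨ε, hε, hsep⟩ => ?_⟩
  · refine errMu_eq_idealClassifier_of_eval_eq μ fun t => ?_
    rw [eval_idealClassifier, Bool.eq_iff_iff, decide_eq_true_iff, hagree]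
  · refine eval_eq_idealClassifier_of_errMu_eq μ (fun t => ?_) herr
    exact sub_ne_zero.mp (abs_pos.mp (hε.trans_le (hsep t)))

/-- A formula agreeing with the ideal classifier on every τ-type has the same
true error; conversely, if the errors agree and `μ` strictly ε-separates every
τ-type for some `ε > 0`, then the formula is logically equivalent to the ideal
classifier. -/
theorem stmt10 {τ : Type} [Fintype τ] [DecidableEq τ]
    (μ : (τ → Bool) → Bool → ℝ)
    (hnn : ∀ t b, 0 ≤ μ t b)
    (hpos : ∀ t : τ → Bool, 0 < μ t true + μ t false)
    (hsum : ∑ t : τ → Bool, ∑ b : Bool, μ t b = 1)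
    (φ : PropForm τ) :
    ((∀ t : τ → Bool, (φ.eval t = true ↔ μ t false ≤ μ t true)) →
      errMu μ φ = errMu μ (idealClassifier μ)) ∧
    (errMu μ φ = errMu μ (idealClassifier μ) →
      (∃ ε > (0 : ℝ), ∀ t : τ → Bool, ε ≤ |μ t true - μ t false|) →
      ∀ v : τ → Bool, φ.eval v = (idealClassifier μ).eval v) :=
  stmt10_general μ φ
end
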